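/- arXiv:1701.03570 — 4 statements merged into one kernel-verified Lean document; each statement's English description precedes it below -/
import Mathlib

section
/- Let X be a Banach space, D ⊆ X a compact set with 0 ∈ D. For δ > 0 let O_δ denote the connected component of the open δ-neighborhood N_δ(D) = {x : dist(x,D) < δ} containing 0. Then ⋂_{δ>0} closure(O_δ) equals the connected component of D containing 0. -/
/-!
Write `K` for the intersection. The neighbourhood `N_δ(D)` is the thickening of `D`, so `K` lies
in `closure D = D`, and every `O_δ` contains the component of `0` in `D`; it remains to see that `K`
is connected. The closures of the `O_δ` need not be compact, but they shrink onto the compact set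
`D`: by a directed-cover argument on `D`, every open set containing `K` already contains some
`O_δ`. Separating two disjoint closed pieces of `K` by disjoint open sets, the connected set `O_δ`
lies in the piece containing `0`, hence so does `K`.
-/

open Metric Set

section

variable {X : Type*} [PseudoEMetricSpace X] {D : Set X} {F : ℝ → Set X}

theorem exists_subset_of_iInter_closure_subset (hD : IsCompact D) (hF : Monotone F)
    (hFD : ∀ δ > 0, F δ ⊆ thickening δ D) {W : Set X} (hW : IsOpen W)
    (hKW : ⋂ δ ∈ Ioi (0 : ℝ), closure (F δ) ⊆ W) : ∃ δ > 0, F δ ⊆ W := by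
  set G : Ioi (0 : ℝ) → Set X := fun δ => W ∪ (closure (F δ))ᶜ
  have hG_anti : Antitone G := fun δ δ' h =>
    union_subset_union_right W (compl_subset_compl.2 (closure_mono (hF h)))
  have hDG : D ⊆ ⋃ δ, G δ := by
    intro p _
    by_cases hp : p ∈ ⋂ δ ∈ Ioi (0 : ℝ), closure (F δ)
    · exact mem_iUnion.2 ⟨⟨1, mem_Ioi.2 one_pos⟩, Or.inl (hKW hp)⟩
    · simp only [mem_iInter₂, not_forall] at hp
      obtain ⟨δ, hδ, hpδ⟩ := hp
      exact mem_iUnion.2 ⟨⟨δ, hδ⟩, Or.inr hpδ⟩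
  obtain ⟨⟨δ₀, hδ₀⟩, hDδ₀⟩ := hD.elim_directed_cover G
    (fun _ => hW.union isClosed_closure.isOpen_compl) hDG hG_anti.directed_le
  obtain ⟨ε, hε, hεG⟩ := hD.exists_thickening_subset_open
    (hW.union isClosed_closure.isOpen_compl) hDδ₀
  refine ⟨min ε δ₀, lt_min hε hδ₀, fun x hx => ?_⟩
  have hx_thick : x ∈ thickening ε D :=
    thickening_mono (min_le_left _ _) D (hFD _ (lt_min hε hδ₀) hx)
  have hx_cl : x ∈ closure (F δ₀) := subset_closure (hF (min_le_right _ _) hx)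
  exact (hεG hx_thick).resolve_right (not_not_intro hx_cl)

theorem isPreconnected_iInter_closure (hD : IsCompact D) (hF : Monotone F)
    (hFD : ∀ δ > 0, F δ ⊆ thickening δ D) (hF_pre : ∀ δ > 0, IsPreconnected (F δ)) {x : X}
    (hx : ∀ δ > 0, x ∈ F δ) : IsPreconnected (⋂ δ ∈ Ioi (0 : ℝ), closure (F δ)) := by
  set K := ⋂ δ ∈ Ioi (0 : ℝ), closure (F δ)
  have hxK : x ∈ K := mem_iInter₂.2 fun δ hδ => subset_closure (hx δ hδ)
  have key : ∀ u v : Set X, IsClosed u → IsClosed v → K ⊆ u ∪ v → Disjoint u v → x ∈ u →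
      K ⊆ u := by
    intro u v hu hv hKuv huv hxu
    obtain ⟨U, V, hU, hV, huU, hvV, hUV⟩ := normal_separation hu hv huv
    obtain ⟨δ, hδ, hFδ⟩ := exists_subset_of_iInter_closure_subset hD hF hFD (hU.union hV)
      (hKuv.trans (union_subset_union huU hvV))
    have hFU : F δ ⊆ U := (hF_pre δ hδ).subset_left_of_subset_union hU hV hUV hFδ
      ⟨x, hx δ hδ, huU hxu⟩
    have hKU : K ⊆ closure U := (biInter_subset_of_mem hδ).trans (closure_mono hFU)
    intro z hz
    exact (hKuv hz).resolve_right fun hzv =>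
      (hUV.closure_left hV).notMem_of_mem_left (hKU hz) (hvV hzv)
  rw [isPreconnected_iff_subset_of_fully_disjoint_closed
    (isClosed_biInter fun _ _ => isClosed_closure)]
  intro u v hu hv hKuv huv
  rcases hKuv hxK with hxu | hxv
  · exact Or.inl (key u v hu hv hKuv huv hxu)
  · exact Or.inr (key v u hv hu ((union_comm u v) ▸ hKuv) huv.symm hxv)

theorem iInter_closure_subset_closure (hFD : ∀ δ > 0, F δ ⊆ thickening δ D) :
    ⋂ δ ∈ Ioi (0 : ℝ), closure (F δ) ⊆ closure D := by
  rw [closure_eq_iInter_cthickening]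
  exact iInter₂_mono fun δ hδ =>
    (closure_mono (hFD δ hδ)).trans (closure_thickening_subset_cthickening δ D)

end

theorem stmt_0_general {X : Type*} [NormedAddCommGroup X]
    (D : Set X) (hD : IsCompact D) (h0 : (0 : X) ∈ D) :
    (⋂ δ ∈ Set.Ioi (0 : ℝ),
        closure (connectedComponentIn {x : X | Metric.infDist x D < δ} 0)) =
      connectedComponentIn D 0 := by
  have hN : ∀ δ : ℝ, {x : X | infDist x D < δ} = thickening δ D := fun δ =>
    ext fun _ => (mem_thickening_iff_infDist_lt ⟨0, h0⟩).symm
  simp only [hN]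
  set F : ℝ → Set X := fun δ => connectedComponentIn (thickening δ D) 0
  have hF : Monotone F := fun _ _ h => connectedComponentIn_mono 0 (thickening_mono h D)
  have hFD : ∀ δ > 0, F δ ⊆ thickening δ D := fun δ _ => connectedComponentIn_subset _ _
  have hD_F : ∀ δ > 0, connectedComponentIn D 0 ⊆ F δ := fun δ hδ =>
    connectedComponentIn_mono 0 (self_subset_thickening hδ D)
  refine Subset.antisymm ?_ (subset_iInter₂ fun δ hδ => (hD_F δ hδ).trans subset_closure)
  refine (isPreconnected_iInter_closure hD hF hFD (fun δ _ => isPreconnected_connectedComponentIn)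
    (fun δ hδ => hD_F δ hδ (mem_connectedComponentIn h0))).subset_connectedComponentIn ?_ ?_
  · exact mem_iInter₂.2 fun δ hδ => subset_closure (hD_F δ hδ (mem_connectedComponentIn h0))
  · exact hD.isClosed.closure_eq ▸ iInter_closure_subset_closure hFD

/-- For a compact set `D` containing `0` in a Banach space, the intersection over `δ > 0`
of the closures of the connected components containing `0` of the open `δ`-neighborhoods
`{x | dist(x, D) < δ}` equals the connected component of `0` in `D`. -/
theorem stmt_0 {X : Type*} [NormedAddCommGroup X] [NormedSpace ℝ X] [CompleteSpace X]
    (D : Set X) (hD : IsCompact D) (h0 : (0 : X) ∈ D) :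
    (⋂ δ ∈ Set.Ioi (0 : ℝ),
        closure (connectedComponentIn {x : X | Metric.infDist x D < δ} 0)) =
      connectedComponentIn D 0 :=
  stmt_0_general D hD h0
end

section
/- For each k ∈ ℕ, the functional I on ℓ² from the example satisfies condition (A3'): letting X^k = {(0,x₁,…,x_k,0,0,…)}, there exists ρ_k > 0 such that sup{ I(u) : u ∈ X^k, ‖u‖ = ρ_k } < 0. -/
/-!
At `t = 0` oddness of `μ` gives `a₊ = a₋ = 2`, so on `X^k` the functional is
`½ ∑ xⱼ² − (4/3) ∑_{j ≤ k} 3^{−j} |xⱼ|^{3/2}`. On the sphere of radius `ρ` every coordinate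
satisfies `|xⱼ| ≤ ρ`, hence `xⱼ² ≤ √ρ |xⱼ|^{3/2}`; for `ρ = 9^{−k}` this makes each summand
`3^{−j} |xⱼ|^{3/2}` at least `xⱼ²`, and so `I(u) ≤ ½ ρ² − (4/3) ρ² = −(5/6) ρ²`.
-/

noncomputable section

/-- The space `X = ℓ²`, with elements written `(t, x₁, x₂, …)`:
the first coordinate `t` is singled out. -/
abbrev X : Type := ℝ × lp (fun _ : ℕ => ℝ) 2

/-- The properties of the function `μ` of the example. -/
def MuOK (μ : ℝ → ℝ) : Prop :=
  ContDiff ℝ 1 μ ∧ (∀ t, μ t ∈ Set.Icc (-1 : ℝ) 1) ∧ (∀ t, μ (-t) = -μ t) ∧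
    (∀ t, 1 ≤ t → μ t = 1) ∧ (∀ t, t ≤ -1 → μ t = -1) ∧
    ∀ t ∈ Set.Ioo (-1 : ℝ) 1, 0 < deriv μ t

/-- `a₊(t) = 2 + μ(t)`. -/
def aplus (μ : ℝ → ℝ) (t : ℝ) : ℝ := 2 + μ t

/-- `a₋(t) = 2 − μ(t)`. -/
def aminus (μ : ℝ → ℝ) (t : ℝ) : ℝ := 2 - μ t

/-- `φ(t) = (t−1)²` for `t > 1`, `0` on `[−1,1]`, `(t+1)²` for `t < −1`. -/
def phi (t : ℝ) : ℝ := if 1 < t then (t - 1) ^ 2 else if t < -1 then (t + 1) ^ 2 else 0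

/-- The `j`-th summand (for `j = 1, 2, …`, here indexed by `j : ℕ` standing for `j+1`) of the
nonquadratic part: `3^{−j} (a₊(t) (x_j)₊^{3/2} + a₋(t) (x_j)₋^{3/2})`. -/
def W (μ : ℝ → ℝ) (t : ℝ) (j : ℕ) (x : ℝ) : ℝ :=
  ((3 : ℝ) ^ (j + 1))⁻¹ *
    (aplus μ t * (max x 0) ^ ((3 : ℝ) / 2) + aminus μ t * (max (-x) 0) ^ ((3 : ℝ) / 2))

/-- The functional
`I(t,x₁,x₂,…) = ½ ∑ xⱼ² − ⅔ ∑ 3^{−j} (a₊(t)(xⱼ)₊^{3/2} + a₋(t)(xⱼ)₋^{3/2}) + φ(t)`. -/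
def Ifun (μ : ℝ → ℝ) (u : X) : ℝ :=
  (1 / 2) * (∑' j : ℕ, (u.2 j) ^ 2) - (2 / 3) * (∑' j : ℕ, W μ u.1 j (u.2 j)) + phi u.1

lemma mu_zero_of_odd {μ : ℝ → ℝ} (hodd : ∀ t, μ (-t) = -μ t) : μ 0 = 0 := by
  linarith [neg_zero (G := ℝ) ▸ hodd 0]

lemma W_apply_zero (μ : ℝ → ℝ) (t : ℝ) (j : ℕ) : W μ t j 0 = 0 := by
  simp [W]

lemma W_zero_of_mu_zero {μ : ℝ → ℝ} (h0 : μ 0 = 0) (j : ℕ) (x : ℝ) :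
    W μ 0 j x = 2 * ((3 : ℝ) ^ (j + 1))⁻¹ * |x| ^ ((3 : ℝ) / 2) := by
  have h32 : (0 : ℝ) ^ ((3 : ℝ) / 2) = 0 := Real.zero_rpow (by norm_num)
  rcases le_total x 0 with hx | hx
  · simp [W, aplus, aminus, h0, hx, abs_of_nonpos hx, h32]
    ring
  · simp [W, aplus, aminus, h0, hx, abs_of_nonneg hx, h32]
    ring

lemma sq_le_sqrt_mul_rpow_three_halves {x r : ℝ} (hx : |x| ≤ r) :
    x ^ 2 ≤ √r * |x| ^ ((3 : ℝ) / 2) := by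
  have hs : |x| ^ ((3 : ℝ) / 2) = √|x| ^ 3 := by
    rw [Real.sqrt_eq_rpow, ← Real.rpow_natCast, ← Real.rpow_mul (abs_nonneg x)]
    norm_num
  have hsq : x ^ 2 = √|x| ^ 4 := by
    rw [show 4 = 2 * 2 by rfl, pow_mul, Real.sq_sqrt (abs_nonneg x), sq_abs]
  rw [hs, hsq, show 4 = 1 + 3 by rfl, pow_add, pow_one]
  gcongr

lemma two_mul_sq_le_W_zero {μ : ℝ → ℝ} (h0 : μ 0 = 0) {j k : ℕ} (hj : j < k) {x : ℝ}
    (hx : |x| ≤ (((3 : ℝ) ^ k)⁻¹) ^ 2) : 2 * x ^ 2 ≤ W μ 0 j x := by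
  have h3 : ((3 : ℝ) ^ k)⁻¹ ≤ ((3 : ℝ) ^ (j + 1))⁻¹ :=
    inv_anti₀ (by positivity) (pow_le_pow_right₀ (by norm_num) hj)
  calc 2 * x ^ 2 ≤ 2 * (((3 : ℝ) ^ k)⁻¹ * |x| ^ ((3 : ℝ) / 2)) := by
        have := sq_le_sqrt_mul_rpow_three_halves hx
        rw [Real.sqrt_sq (by positivity)] at this
        linarith
    _ ≤ W μ 0 j x := by
        rw [W_zero_of_mu_zero h0, mul_assoc]
        gcongr

lemma lp.tsum_sq_eq_norm_sq {α : Type*} (f : lp (fun _ : α => ℝ) 2) :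
    ∑' j, f j ^ 2 = ‖f‖ ^ 2 := by
  have h := lp.norm_rpow_eq_tsum (p := 2) (by norm_num) f
  simp only [ENNReal.toReal_ofNat, Real.rpow_two, Real.norm_eq_abs, sq_abs] at h
  exact h.symm

/-- Condition (A3') for the example: for each `k`, on the `k`-dimensional subspace
`X^k = {(0, x₁, …, x_k, 0, 0, …)}` there is `ρ_k > 0` with
`sup { I(u) : u ∈ X^k, ‖u‖ = ρ_k } < 0`. -/
theorem stmt_6 (μ : ℝ → ℝ) (hμ : MuOK μ) (k : ℕ) :
    ∃ ρ > (0 : ℝ), ∃ c < (0 : ℝ),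
      ∀ u : X, u.1 = 0 → (∀ j : ℕ, k ≤ j → u.2 j = 0) → ‖u‖ = ρ → Ifun μ u ≤ c := by
  have h0 : μ 0 = 0 := mu_zero_of_odd hμ.2.2.1
  set ρ : ℝ := (((3 : ℝ) ^ k)⁻¹) ^ 2
  have hρ : 0 < ρ := by positivity
  refine ⟨ρ, hρ, -(5 / 6) * ρ ^ 2, by nlinarith, fun u ht hsupp hu => ?_⟩
  have hx : ‖u.2‖ = ρ := by simpa [Prod.norm_def, ht] using hu
  have hcoord : ∀ j, |u.2 j| ≤ ρ := fun j => by
    simpa [hx] using lp.norm_apply_le_norm two_ne_zero u.2 j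
  have hW : ∀ j, 2 * u.2 j ^ 2 ≤ W μ 0 j (u.2 j) := by
    intro j
    rcases lt_or_ge j k with hj | hj
    · exact two_mul_sq_le_W_zero h0 hj (hcoord j)
    · simp [hsupp j hj, W_apply_zero]
  have hfin : ∀ j ∉ Finset.range k, u.2 j = 0 := fun j hj => hsupp j (by simpa using hj)
  have hsum : 2 * ∑' j, u.2 j ^ 2 ≤ ∑' j, W μ 0 j (u.2 j) := by
    rw [← tsum_mul_left]
    refine Summable.tsum_le_tsum hW
      (summable_of_ne_finset_zero (s := Finset.range k) fun j hj => ?_)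
      (summable_of_ne_finset_zero (s := Finset.range k) fun j hj => ?_)
    · simp [hfin j hj]
    · simp [hfin j hj, W_apply_zero]
  have hI : Ifun μ u = (1 / 2) * ρ ^ 2 - (2 / 3) * ∑' j, W μ 0 j (u.2 j) := by
    simp only [Ifun, ht, lp.tsum_sq_eq_norm_sq, hx]
    norm_num [phi]
  rw [lp.tsum_sq_eq_norm_sq, hx] at hsum
  linarith

end
end

section
/- Let (x_j)_{j≥1} be a real sequence such that for every j, x_j = 0 or 3^{−2j} ≤ |x_j| ≤ 9·3^{−2j}, and suppose ∑_{j=1}^∞ 3^{−j}((x_j)₊^{3/2} − (x_j)₋^{3/2}) = 0. Then x_j = 0 for all j. -/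
/-! The terms of the series have magnitudes pinned between `3^{-4j}` and `27 · 3^{-4j}`, so the
first nonzero term outweighs the whole tail after it, which is at most `(27/80) · 3^{-4j}`;
a vanishing sum therefore has no nonzero term. -/

open Real

theorem eq_zero_of_tsum_eq_zero_of_geometric_bounds {f : ℕ → ℝ} {c C r : ℝ} (hr0 : 0 < r)
    (hr1 : r < 1) (hCr : C * r < c * (1 - r)) (hup : ∀ j, |f j| ≤ C * r ^ j)
    (hlow : ∀ j, f j ≠ 0 → c * r ^ j ≤ |f j|) (hf : ∑' j, f j = 0) : ∀ j, f j = 0 := by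
  have hfs : Summable f :=
    ((summable_geometric_of_lt_one hr0.le hr1).mul_left C).of_norm_bounded hup
  by_contra! h
  classical
  set n := Nat.find h
  have hn : f n ≠ 0 := Nat.find_spec h
  have hsplit : f n + ∑' i, f (i + (n + 1)) = 0 := by
    rw [← hf, ← hfs.sum_add_tsum_nat_add (n + 1), Finset.sum_range_succ,
      Finset.sum_eq_zero fun j hj => not_not.1 (Nat.find_min h (Finset.mem_range.1 hj)), zero_add]
  have htail : HasSum (fun i => C * r ^ (i + (n + 1))) (C * r ^ (n + 1) * (1 - r)⁻¹) := by
    simpa only [pow_add, mul_comm, mul_left_comm, mul_assoc] using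
      (hasSum_geometric_of_lt_one hr0.le hr1).mul_left (C * r ^ (n + 1))
  have hle : c * r ^ n ≤ C * r ^ (n + 1) * (1 - r)⁻¹ :=
    calc c * r ^ n ≤ |f n| := hlow n hn
      _ = |∑' i, f (i + (n + 1))| := by rw [eq_neg_of_add_eq_zero_left hsplit, abs_neg]
      _ ≤ _ := by
        simpa only [Real.norm_eq_abs] using
          tsum_of_norm_bounded (f := fun i => f (i + (n + 1))) htail fun i => hup _
  have hlt : C * r ^ (n + 1) * (1 - r)⁻¹ < c * r ^ n := by
    rw [← div_eq_mul_inv, div_lt_iff₀ (sub_pos.2 hr1)]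
    calc C * r ^ (n + 1) = C * r * r ^ n := by ring
      _ < c * (1 - r) * r ^ n := mul_lt_mul_of_pos_right hCr (pow_pos hr0 n)
      _ = c * r ^ n * (1 - r) := by ring
  exact hle.not_gt hlt

theorem abs_max_rpow_sub_max_neg_rpow (t : ℝ) {p : ℝ} (hp : p ≠ 0) :
    |max t 0 ^ p - max (-t) 0 ^ p| = |t| ^ p := by
  rcases le_total 0 t with ht | ht
  · rw [max_eq_left ht, max_eq_right (neg_nonpos.2 ht), zero_rpow hp, sub_zero,
      abs_of_nonneg (rpow_nonneg ht p), abs_of_nonneg ht]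
  · rw [max_eq_right ht, max_eq_left (neg_nonneg.2 ht), zero_rpow hp, zero_sub, abs_neg,
      abs_of_nonneg (rpow_nonneg (neg_nonneg.2 ht) p), abs_of_nonpos ht]

theorem sq_rpow_three_halves {b : ℝ} (hb : 0 ≤ b) : (b ^ 2) ^ (3 / 2 : ℝ) = b ^ 3 := by
  rw [← rpow_natCast b 2, ← rpow_mul hb]
  norm_num

theorem mul_rpow_three_halves_le {b y : ℝ} (hb : 0 ≤ b) (hy : 0 ≤ y) (h : y ≤ 9 * b ^ 2) :
    b * y ^ (3 / 2 : ℝ) ≤ 27 * b ^ 4 := by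
  have : y ^ (3 / 2 : ℝ) ≤ (3 * b) ^ 3 := by
    rw [← sq_rpow_three_halves (by positivity : 0 ≤ 3 * b)]
    exact rpow_le_rpow hy (by linarith) (by norm_num)
  nlinarith

theorem le_mul_rpow_three_halves {b y : ℝ} (hb : 0 ≤ b) (h : b ^ 2 ≤ y) :
    b ^ 4 ≤ b * y ^ (3 / 2 : ℝ) := by
  have : b ^ 3 ≤ y ^ (3 / 2 : ℝ) := by
    rw [← sq_rpow_three_halves hb]
    exact rpow_le_rpow (by positivity) h (by norm_num)
  nlinarith

theorem inv_three_pow_succ_pow_four (j : ℕ) :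
    ((3 : ℝ) ^ (j + 1))⁻¹ ^ 4 = 81⁻¹ * 81⁻¹ ^ j := by
  rw [← pow_succ', ← inv_pow, ← pow_mul, show (81 : ℝ)⁻¹ = 3⁻¹ ^ 4 by norm_num, ← pow_mul,
    mul_comm]

/-- If a real sequence `(x_j)_{j≥1}` (indexed here by `j : ℕ` standing for `j + 1`) satisfies,
for every `j`, `x_j = 0` or `3^{−2j} ≤ |x_j| ≤ 9·3^{−2j}`, and
`∑_{j=1}^∞ 3^{−j}((x_j)₊^{3/2} − (x_j)₋^{3/2}) = 0`, then `x_j = 0` for all `j`. -/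
theorem stmt_8 (x : ℕ → ℝ)
    (hx : ∀ j : ℕ, x j = 0 ∨
      (((3 : ℝ) ^ (2 * (j + 1)))⁻¹ ≤ |x j| ∧ |x j| ≤ 9 * ((3 : ℝ) ^ (2 * (j + 1)))⁻¹))
    (hsum : ∑' j : ℕ, ((3 : ℝ) ^ (j + 1))⁻¹ *
        ((max (x j) 0) ^ ((3 : ℝ) / 2) - (max (-(x j)) 0) ^ ((3 : ℝ) / 2)) = 0) :
    ∀ j, x j = 0 := by
  set b : ℕ → ℝ := fun j => ((3 : ℝ) ^ (j + 1))⁻¹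
  set f : ℕ → ℝ := fun j =>
    b j * (max (x j) 0 ^ ((3 : ℝ) / 2) - max (-(x j)) 0 ^ ((3 : ℝ) / 2))
  have hb : ∀ j, 0 < b j := fun j => by positivity
  have hb2 : ∀ j, ((3 : ℝ) ^ (2 * (j + 1)))⁻¹ = b j ^ 2 := fun j => by rw [pow_mul', inv_pow]
  have habs : ∀ j, |f j| = b j * |x j| ^ ((3 : ℝ) / 2) := fun j => by
    rw [abs_mul, abs_of_pos (hb j), abs_max_rpow_sub_max_neg_rpow _ (by norm_num)]
  have hup : ∀ j, |f j| ≤ 27 * 81⁻¹ * 81⁻¹ ^ j := fun j => by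
    rw [habs, mul_assoc, ← inv_three_pow_succ_pow_four]
    refine mul_rpow_three_halves_le (hb j).le (abs_nonneg _) ?_
    rcases hx j with h | h
    · rw [h, abs_zero]; positivity
    · exact hb2 j ▸ h.2
  have hlow : ∀ j, x j ≠ 0 → 81⁻¹ * 81⁻¹ ^ j ≤ |f j| := fun j hj => by
    rw [habs, ← inv_three_pow_succ_pow_four]
    exact le_mul_rpow_three_halves (hb j).le (hb2 j ▸ ((hx j).resolve_left hj).1)
  have hf : ∀ j, f j = 0 :=
    eq_zero_of_tsum_eq_zero_of_geometric_bounds (r := 81⁻¹) (by norm_num) (by norm_num)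
      (by norm_num) hup
      (fun j hj => hlow j fun h => hj (by simp [f, h, zero_rpow (by norm_num : (3 : ℝ) / 2 ≠ 0)]))
      hsum
  exact fun j => by_contra fun hj => (hlow j hj).not_gt (by rw [hf j, abs_zero]; positivity)
end

section
/- (Failure of (PS)₀ for the example of Theorem 1.8.) The restriction of I (as in the previous example, I(u) = 1 − cos(2π‖u‖²) for ‖u‖ ≤ 1) to an infinite-dimensional Hilbert space E does not satisfy the Palais–Smale condition at level 0: there exists a sequence (u_j) with I(u_j) → 0 and I'(u_j) → 0 in E* having no convergent subsequence. -/
/-!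
The sphere `‖u‖ = 1` consists of critical points of `I` at level `0`, since `t ↦ 1 - cos (2πt)`
has a critical point with value `0` at `t = 1`. Points `r_j e_j`, with `(e_j)` orthonormal and
radii `r_j ↑ 1`, are interior points of the ball where `I` and `I'` are given by the formula,
so `I(u_j) → 0` and `I'(u_j) → 0`; but `‖u_m - u_n‖² = r_m² + r_n² > 1/2` for `m ≠ n`.
-/

open Real Filter Topology

theorem exists_orthonormal_nat_of_not_finiteDimensional {𝕜 E : Type*} [RCLike 𝕜]
    [NormedAddCommGroup E] [InnerProductSpace 𝕜 E] (hE : ¬ FiniteDimensional 𝕜 E) :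
    ∃ e : ℕ → E, Orthonormal 𝕜 e := by
  let b := Module.Basis.ofVectorSpace 𝕜 E
  have : Infinite (Module.Basis.ofVectorSpaceIndex 𝕜 E) :=
    not_finite_iff_infinite.mp fun _ => hE (Module.Finite.of_basis b)
  let ι := Infinite.natEmbedding (Module.Basis.ofVectorSpaceIndex 𝕜 E)
  exact ⟨InnerProductSpace.gramSchmidtNormed 𝕜 (b ∘ ι),
    InnerProductSpace.gramSchmidtNormed_orthonormal (b.linearIndependent.comp ι ι.injective)⟩

theorem Orthonormal.norm_smul_sub_smul_sq {E ι : Type*} [NormedAddCommGroup E]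
    [InnerProductSpace ℝ E] {e : ι → E} (he : Orthonormal ℝ e) {i j : ι} (hij : i ≠ j)
    (a b : ℝ) : ‖a • e i - b • e j‖ ^ 2 = a ^ 2 + b ^ 2 := by
  rw [norm_sub_sq_real, real_inner_smul_left, real_inner_smul_right, he.2 hij, norm_smul,
    norm_smul, he.1 i, he.1 j, Real.norm_eq_abs, Real.norm_eq_abs]
  simp

theorem not_tendsto_comp_of_pairwise_le_dist {X : Type*} [PseudoMetricSpace X] {u : ℕ → X}
    {δ : ℝ} (hδ : 0 < δ) (hu : Pairwise fun m n => δ ≤ dist (u m) (u n)) {φ : ℕ → ℕ}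
    (hφ : StrictMono φ) (l : X) : ¬ Tendsto (fun j => u (φ j)) atTop (𝓝 l) := fun hl => by
  obtain ⟨N, hN⟩ := Metric.cauchySeq_iff'.mp hl.cauchySeq δ hδ
  exact (hN (N + 1) N.le_succ).not_ge (hu (hφ N.lt_succ_self).ne')

section Radial

variable {E : Type*} [NormedAddCommGroup E] [InnerProductSpace ℝ E]

theorem HasDerivAt.hasFDerivAt_comp_norm_sq {g : ℝ → ℝ} {g' : ℝ} {x : E}
    (hg : HasDerivAt g g' (‖x‖ ^ 2)) :
    HasFDerivAt (fun y => g (‖y‖ ^ 2)) ((2 * g') • innerSL ℝ x) x := by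
  refine (hg.comp_hasFDerivAt x (hasStrictFDerivAt_norm_sq x).hasFDerivAt).congr_fderiv ?_
  ext y
  simp only [smul_apply, coe_innerSL_apply, nsmul_eq_mul, Nat.cast_ofNat, smul_eq_mul]
  ring

theorem norm_fderiv_of_eventuallyEq_comp_norm_sq {I : E → ℝ} {g : ℝ → ℝ} {g' : ℝ} {x : E}
    (hI : I =ᶠ[𝓝 x] fun y => g (‖y‖ ^ 2)) (hg : HasDerivAt g g' (‖x‖ ^ 2)) :
    ‖fderiv ℝ I x‖ = 2 * |g'| * ‖x‖ := by
  rw [(hg.hasFDerivAt_comp_norm_sq.congr_of_eventuallyEq hI).fderiv, norm_smul,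
    innerSL_apply_norm, Real.norm_eq_abs, abs_mul, abs_two]

theorem exists_seq_tendsto_critical_no_convergent_subseq_of_radial
    (hE : ¬ FiniteDimensional ℝ E) {I : E → ℝ} {g g' : ℝ → ℝ}
    (hI : ∀ u : E, ‖u‖ ≤ 1 → I u = g (‖u‖ ^ 2)) (hg : ∀ t, HasDerivAt g (g' t) t)
    (hg' : Tendsto g' (𝓝 1) (𝓝 0)) :
    ∃ u : ℕ → E,
      Tendsto (fun j => I (u j)) atTop (𝓝 (g 1)) ∧
      Tendsto (fun j => ‖fderiv ℝ I (u j)‖) atTop (𝓝 0) ∧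
      ∀ φ : ℕ → ℕ, StrictMono φ → ¬ ∃ l : E, Tendsto (fun j => u (φ j)) atTop (𝓝 l) := by
  obtain ⟨e, he⟩ := exists_orthonormal_nat_of_not_finiteDimensional hE
  obtain ⟨r, -, hr, hr1⟩ := exists_seq_strictMono_tendsto' (show (1 / 2 : ℝ) < 1 by norm_num)
  have hnorm (j : ℕ) : ‖r j • e j‖ = r j := by
    rw [norm_smul, he.1 j, mul_one, Real.norm_of_nonneg (by linarith [(hr j).1])]
  have hI_near (j : ℕ) : I =ᶠ[𝓝 (r j • e j)] fun y => g (‖y‖ ^ 2) :=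
    eventually_of_mem (Metric.isOpen_ball.mem_nhds (by simpa [hnorm] using (hr j).2))
      fun y hy => hI y (mem_ball_zero_iff.mp hy).le
  have hr1sq : Tendsto (fun j => r j ^ 2) atTop (𝓝 1) := by simpa using hr1.pow 2
  refine ⟨fun j => r j • e j, ?_, ?_, fun φ hφ ⟨l, hl⟩ => ?_⟩
  · refine ((hg 1).continuousAt.tendsto.comp hr1sq).congr fun j => ?_
    simp [hI _ (hnorm j ▸ (hr j).2.le), hnorm]
  · have : Tendsto (fun j => 2 * |g' (r j ^ 2)| * r j) atTop (𝓝 (2 * |0| * 1)) :=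
      ((hg'.comp hr1sq).abs.const_mul 2).mul hr1
    rw [abs_zero, mul_zero, zero_mul] at this
    refine this.congr fun j => ?_
    rw [norm_fderiv_of_eventuallyEq_comp_norm_sq (hI_near j) (hg _), hnorm]
  · refine not_tendsto_comp_of_pairwise_le_dist (u := fun j => r j • e j) (δ := 1 / 2)
      (by norm_num) (fun m n hmn => ?_) hφ l hl
    have hsq := he.norm_smul_sub_smul_sq hmn (r m) (r n)
    beta_reduce
    rw [dist_eq_norm]
    nlinarith [(hr m).1, (hr n).1, norm_nonneg (r m • e m - r n • e n)]

end Radial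

theorem stmt_18_general {E : Type*} [NormedAddCommGroup E] [InnerProductSpace ℝ E]
    (hE : ¬ FiniteDimensional ℝ E)
    (I : E → ℝ)
    (hI : ∀ u : E, ‖u‖ ≤ 1 → I u = 1 - Real.cos (2 * π * ‖u‖ ^ 2)) :
    ∃ u : ℕ → E,
      Tendsto (fun j => I (u j)) atTop (nhds 0) ∧
      Tendsto (fun j => ‖fderiv ℝ I (u j)‖) atTop (nhds 0) ∧
      ∀ φ : ℕ → ℕ, StrictMono φ → ¬ ∃ l : E, Tendsto (fun j => u (φ j)) atTop (nhds l) := by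
  have hg (t : ℝ) : HasDerivAt (fun t => 1 - cos (2 * π * t)) (2 * π * sin (2 * π * t)) t :=
    (((hasDerivAt_id' t).const_mul (2 * π)).cos.const_sub 1).congr_deriv (by ring)
  have hg' : Tendsto (fun t => 2 * π * sin (2 * π * t)) (𝓝 1) (𝓝 0) := by
    simpa using (by fun_prop : Continuous fun t => 2 * π * sin (2 * π * t)).tendsto 1
  simpa using exists_seq_tendsto_critical_no_convergent_subseq_of_radial hE hI hg hg'

/-- Failure of `(PS)₀`: if `E` is an infinite-dimensional Hilbert space and `I : E → ℝ` is a
differentiable functional with `I(u) = 1 − cos(2π‖u‖²)` for `‖u‖ ≤ 1` (extended arbitrarily,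
e.g. as in the example of Theorem 1.8), then `I` does not satisfy the Palais–Smale condition
at level `0`: there is a sequence `(u_j)` with `I(u_j) → 0`, `‖I'(u_j)‖ → 0`, and no
convergent subsequence. -/
theorem stmt_18 {E : Type*} [NormedAddCommGroup E] [InnerProductSpace ℝ E]
    [CompleteSpace E] (hE : ¬ FiniteDimensional ℝ E)
    (I : E → ℝ) (hdiff : Differentiable ℝ I)
    (hI : ∀ u : E, ‖u‖ ≤ 1 → I u = 1 - Real.cos (2 * π * ‖u‖ ^ 2)) :
    ∃ u : ℕ → E,
      Tendsto (fun j => I (u j)) atTop (nhds 0) ∧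
      Tendsto (fun j => ‖fderiv ℝ I (u j)‖) atTop (nhds 0) ∧
      ∀ φ : ℕ → ℕ, StrictMono φ → ¬ ∃ l : E, Tendsto (fun j => u (φ j)) atTop (nhds l) :=
  stmt_18_general hE I hI
end
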